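/- arXiv:1510.06118 — 4 statements merged into one kernel-verified Lean document; each statement's English description precedes it below -/
import Mathlib

section
/- Let F : A → B be an exact functor between abelian categories, with A well-powered, and let S = ker(F) be the full subcategory of objects x with F(x) ≅ 0. Suppose that (1) for every object y of B there is an object x of A with F(x) ≅ y, and (2) for every morphism f : F(x) → F(x′) in B there exist an object x″ of A and morphisms h : x″ → x and g : x″ → x′ such that F(h) is an isomorphism and f ∘ F(h) = F(g). Then the induced functor A/S → B is an equivalence of categories. -/
open CategoryTheory CategoryTheory.Limits

/-- The class of morphisms of `A` whose kernel and cokernel are killed by `F`;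
the quotient of `A` by the Serre subcategory `ker F` is the localization of `A`
at this class of morphisms. -/
noncomputable def serreKernelW {A B : Type*} [Category A] [Category B] [Abelian A] [Abelian B]
    (F : A ⥤ B) : MorphismProperty A :=
  fun _ _ f => IsZero (F.obj (kernel f)) ∧ IsZero (F.obj (cokernel f))

/-! The lift `G` of `F` through a localization at `W` is an equivalence as soon as `F` is
essentially surjective, every morphism `F x ⟶ F x'` is the image of a right fraction, and (`W`
having a calculus of left fractions) any two morphisms identified by `F` are coequalized by a
morphism of `W`. The class `serreKernelW F` is Mathlib's `F.kernel.isoModSerre`, which for exact `F`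
is the class of morphisms inverted by `F`; two morphisms `f, g` with `F f = F g` are then
coequalized by the cokernel of `f - g`. -/

namespace CategoryTheory.Localization

variable {C D E : Type*} [Category C] [Category D] [Category E]
  {W : MorphismProperty C} {L : C ⥤ D} [L.IsLocalization W]
  {F : C ⥤ E} {G : D ⥤ E}

lemma full_of_exists_rightFraction (e : L ⋙ G ≅ F)
    (h : ∀ (x x' : C) (f : F.obj x ⟶ F.obj x'),
      ∃ (x'' : C) (s : x'' ⟶ x) (g : x'' ⟶ x'), W s ∧ F.map s ≫ f = F.map g) :
    G.Full := by
  have := essSurj L W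
  refine G.full_of_comp_essSurj L fun x x' φ => ?_
  obtain ⟨x'', s, g, hs, fac⟩ := h x x' (e.inv.app x ≫ φ ≫ e.hom.app x')
  have := inverts L W s hs
  refine ⟨inv (L.map s) ≫ L.map g, ?_⟩
  rw [G.map_comp, Functor.map_inv, IsIso.inv_comp_eq, ← Functor.comp_map, ← Functor.comp_map,
    ← NatIso.naturality_2 e g, ← NatIso.naturality_2 e s, ← fac]
  simp

lemma faithful_of_map_eq_imp_exists_postcomp [W.HasLeftCalculusOfFractions] (e : L ⋙ G ≅ F)
    (h : ∀ ⦃x y : C⦄ (f g : x ⟶ y), F.map f = F.map g →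
      ∃ (z : C) (s : y ⟶ z), W s ∧ f ≫ s = g ≫ s) :
    G.Faithful := by
  refine Functor.faithful_of_comp_of_hasLeftCalculusOfFractions L W G fun x y f g hfg => ?_
  obtain ⟨z, s, hs, fac⟩ := h f g (by
    rw [← NatIso.naturality_1 e f, ← NatIso.naturality_1 e g, Functor.comp_map,
      Functor.comp_map, hfg])
  exact (MorphismProperty.map_eq_iff_postcomp L W f g).2 ⟨z, s, hs, fac⟩

end CategoryTheory.Localization

section SerreKernel

variable {A B : Type*} [Category A] [Category B] [Abelian A] [Abelian B]
  (F : A ⥤ B) [PreservesFiniteColimits F]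

lemma isIso_map_cokernel_π_of_map_eq_zero {x y : A} (d : x ⟶ y) (hd : F.map d = 0) :
    IsIso (F.map (cokernel.π d)) := by
  have : IsIso (cokernel.π (F.map d)) :=
    CokernelCofork.IsColimit.isIso_π (CokernelCofork.ofπ _ (cokernel.condition _))
      (cokernelIsCokernel (F.map d)) hd
  rw [← PreservesCokernel.π_iso_hom F d] at this
  exact IsIso.of_isIso_comp_right _ (PreservesCokernel.iso F d).hom

variable [PreservesFiniteLimits F]

lemma serreKernelW_iff {x y : A} (f : x ⟶ y) : serreKernelW F f ↔ IsIso (F.map f) := by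
  rw [show serreKernelW F = F.kernel.isoModSerre from rfl,
    Abelian.isoModSerre_kernel_eq_inverseImage_isomorphisms F]
  rfl

instance : (serreKernelW F).HasLeftCalculusOfFractions :=
  inferInstanceAs F.kernel.isoModSerre.HasLeftCalculusOfFractions

lemma exists_serreKernelW_postcomp_eq_of_map_eq {x y : A} (f g : x ⟶ y)
    (hfg : F.map f = F.map g) :
    ∃ (z : A) (s : y ⟶ z), serreKernelW F s ∧ f ≫ s = g ≫ s := by
  have : F.Additive := F.additive_of_preserves_binary_products
  refine ⟨_, cokernel.π (f - g), (serreKernelW_iff F _).2 ?_, ?_⟩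
  · exact isIso_map_cokernel_π_of_map_eq_zero F _ (by rw [F.map_sub, hfg, sub_self])
  · simpa only [Preadditive.sub_comp, sub_eq_zero] using cokernel.condition (f - g)

end SerreKernel

theorem serre_quotient_equivalence_general {A : Type*} {B : Type*}
    [Category.{v₁} A] [Category B] [Abelian A] [Abelian B]
    (F : A ⥤ B) [PreservesFiniteLimits F] [PreservesFiniteColimits F]
    (h1 : ∀ y : B, ∃ x : A, Nonempty (F.obj x ≅ y))
    (h2 : ∀ (x x' : A) (f : F.obj x ⟶ F.obj x'),
      ∃ (x'' : A) (h : x'' ⟶ x) (g : x'' ⟶ x'),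
        IsIso (F.map h) ∧ F.map h ≫ f = F.map g) :
    ∃ G : (serreKernelW F).Localization ⥤ B,
      Nonempty ((serreKernelW F).Q ⋙ G ≅ F) ∧ G.IsEquivalence := by
  have hF : (serreKernelW F).IsInvertedBy F := fun _ _ f hf => (serreKernelW_iff F f).1 hf
  let G := Localization.lift F hF (serreKernelW F).Q
  let e : (serreKernelW F).Q ⋙ G ≅ F := Localization.fac F hF (serreKernelW F).Q
  have : G.Full := Localization.full_of_exists_rightFraction e fun x x' f => by
    obtain ⟨x'', h, g, hh, fac⟩ := h2 x x' f
    exact ⟨x'', h, g, (serreKernelW_iff F h).2 hh, fac⟩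
  have : G.Faithful := Localization.faithful_of_map_eq_imp_exists_postcomp e
    fun _ _ => exists_serreKernelW_postcomp_eq_of_map_eq F
  have : G.EssSurj := ⟨fun y => by
    obtain ⟨x, ⟨i⟩⟩ := h1 y
    exact ⟨(serreKernelW F).Q.obj x, ⟨e.app x ≪≫ i⟩⟩⟩
  exact ⟨G, ⟨e⟩, { }⟩

/-- Let `F : A ⥤ B` be an exact functor between abelian categories, with `A`
well-powered, and let `S = ker F` be the full subcategory of objects `x` with `F x ≅ 0`.
Suppose (1) every object of `B` is isomorphic to some `F x`, and (2) every morphism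
`f : F x ⟶ F x'` fits in a commuting triangle `F h ≫ f = F g` with `F h` an isomorphism.
Then the induced functor `A / S ⥤ B` (where `A / S` is realized as the localization of `A`
at the morphisms whose kernel and cokernel lie in `S`) is an equivalence of categories. -/
theorem serre_quotient_equivalence {A : Type*} {B : Type*}
    [Category.{v₁} A] [Category B] [Abelian A] [Abelian B] [WellPowered.{v₁} A]
    (F : A ⥤ B) [PreservesFiniteLimits F] [PreservesFiniteColimits F]
    (h1 : ∀ y : B, ∃ x : A, Nonempty (F.obj x ≅ y))
    (h2 : ∀ (x x' : A) (f : F.obj x ⟶ F.obj x'),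
      ∃ (x'' : A) (h : x'' ⟶ x) (g : x'' ⟶ x'),
        IsIso (F.map h) ∧ F.map h ≫ f = F.map g) :
    ∃ G : (serreKernelW F).Localization ⥤ B,
      Nonempty ((serreKernelW F).Q ⋙ G ≅ F) ∧ G.IsEquivalence :=
  serre_quotient_equivalence_general F h1 h2
end

section
/- Let A be an abelian category, n a positive integer, and r = (r₁,…,rₙ) an n-tuple of natural numbers with rₙ > 0. Let π : Func(rIⁿ, A) → Func(tr(r)Iⁿ⁻¹, A) be the restriction along the inclusion (x₁,…,x_{n−1}) ↦ (x₁,…,x_{n−1},0), where tr(r) = (r₁,…,r_{n−1}). Then the kernel of π, i.e. the full subcategory of functors G : rIⁿ → A with G(u₁,…,u_{n−1},0) ≅ 0 for all (u₁,…,u_{n−1}), is equivalent to the functor category Func(sIⁿ, A), where s = (r₁,…,r_{n−1}, rₙ − 1). -/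
open CategoryTheory CategoryTheory.Limits

/-- The poset `rIⁿ` of integer points `u` with `0 ≤ uᵢ ≤ rᵢ`, ordered componentwise. -/
abbrev Box (n : ℕ) (r : Fin n → ℕ) : Type := {u : Fin n → ℕ // ∀ i, u i ≤ r i}

/-- The inclusion `(x₁,…,xₙ) ↦ (x₁,…,xₙ,0)` of `tr(r)Iⁿ` into `rIⁿ⁺¹`,
where `tr(r) = (r₁,…,rₙ)` is `r` with its last entry dropped. -/
def boxIncl (n : ℕ) (r : Fin (n + 1) → ℕ) (u : Box n fun i => r i.castSucc) :
    Box (n + 1) r :=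
  ⟨Fin.snoc u.1 0, by
    intro i
    induction i using Fin.lastCases with
    | last => simp
    | cast j => simpa using u.2 j⟩

lemma boxIncl_mono (n : ℕ) (r : Fin (n + 1) → ℕ) : Monotone (boxIncl n r) := by
  intro u v huv i
  induction i using Fin.lastCases with
  | last => simp [boxIncl]
  | cast j => simpa [boxIncl] using huv j

/-- The restriction functor `π : Func(rIⁿ⁺¹, A) ⥤ Func(tr(r)Iⁿ, A)` along the inclusion
`(x₁,…,xₙ) ↦ (x₁,…,xₙ,0)`. -/
def boxRestrict (n : ℕ) (r : Fin (n + 1) → ℕ) (A : Type*) [Category A] :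
    (Box (n + 1) r ⥤ A) ⥤ ((Box n fun i => r i.castSucc) ⥤ A) :=
  (Functor.whiskeringLeft _ _ A).obj (boxIncl_mono n r).functor

/-!
A functor on `rIⁿ⁺¹` vanishing on the face `{uₙ₊₁ = 0}` is determined by its restriction to
the complementary upper set `{uₙ₊₁ ≥ 1}`: restriction is faithful because the remaining objects
are zero, and full because no arrow leaves an upper set, so a transformation extends by zero.
For the same reason every functor on the upper set extends by zero to a functor in the kernel.
Translation by the last unit vector identifies the upper set with `sIⁿ⁺¹`.
-/

namespace CategoryTheory

open ZeroObject

variable {P : Type*} [Preorder P] {U : Set P} {A : Type*} [Category A]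

def vanishingOutside (U : Set P) : ObjectProperty (P ⥤ A) :=
  fun G => ∀ x ∉ U, IsZero (G.obj x)

section ExtendByZero

variable [HasZeroObject A] (hU : IsUpperSet U) (H : U ⥤ A)

open scoped Classical in
noncomputable def extendByZeroObj (x : P) : A :=
  if hx : x ∈ U then H.obj ⟨x, hx⟩ else 0

lemma extendByZeroObj_of_mem {x : P} (hx : x ∈ U) : extendByZeroObj H x = H.obj ⟨x, hx⟩ :=
  dif_pos hx

lemma isZero_extendByZeroObj {x : P} (hx : x ∉ U) : IsZero (extendByZeroObj H x) :=
  (isZero_zero A).of_iso (eqToIso (dif_neg hx))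

open scoped Classical in
noncomputable def extendByZero : P ⥤ A where
  obj := extendByZeroObj H
  map {x y} f :=
    if hx : x ∈ U then
      eqToHom (extendByZeroObj_of_mem H hx) ≫
        H.map (homOfLE (leOfHom f) : (⟨x, hx⟩ : U) ⟶ ⟨y, hU (leOfHom f) hx⟩) ≫
        eqToHom (extendByZeroObj_of_mem H _).symm
    else (isZero_extendByZeroObj H hx).to_ _
  map_id x := by
    split_ifs with hx
    · simp
    · exact (isZero_extendByZeroObj H hx).eq_of_src _ _
  map_comp {x y z} f g := by
    by_cases hx : x ∈ U
    · have hy : y ∈ U := hU (leOfHom f) hx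
      simp only [dif_pos hx, dif_pos hy, Category.assoc, eqToHom_trans_assoc, eqToHom_refl,
        Category.id_comp, ← H.map_comp_assoc, homOfLE_comp]
    · exact (isZero_extendByZeroObj H hx).eq_of_src _ _

variable {H}

lemma extendByZero_obj_of_mem {x : P} (hx : x ∈ U) :
    (extendByZero hU H).obj x = H.obj ⟨x, hx⟩ :=
  dif_pos hx

lemma extendByZero_map_of_mem {x y : P} (hx : x ∈ U) (hy : y ∈ U)
    (f : x ⟶ y) :
    (extendByZero hU H).map f =
      eqToHom (extendByZero_obj_of_mem hU hx) ≫
      H.map (homOfLE (leOfHom f) : (⟨x, hx⟩ : U) ⟶ ⟨y, hy⟩) ≫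
      eqToHom (extendByZero_obj_of_mem hU hy).symm :=
  dif_pos hx

end ExtendByZero

variable (A U) in
def restrictVanishingOutside : (vanishingOutside (A := A) U).FullSubcategory ⥤ (U ⥤ A) :=
  ObjectProperty.ι _ ⋙ (Functor.whiskeringLeft _ _ A).obj (Subtype.mono_coe (· ∈ U)).functor

instance : (restrictVanishingOutside U A).Faithful where
  map_injective {X _} {α β} h := by
    ext x
    by_cases hx : x ∈ U
    · exact NatTrans.congr_app h ⟨x, hx⟩
    · exact (X.2 x hx).eq_of_src _ _

section Full

variable {X Y : (vanishingOutside (A := A) U).FullSubcategory}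
  (γ : (restrictVanishingOutside U A).obj X ⟶ (restrictVanishingOutside U A).obj Y)

open scoped Classical in
noncomputable def extendByZeroApp (x : P) : X.obj.obj x ⟶ Y.obj.obj x :=
  if hx : x ∈ U then γ.app ⟨x, hx⟩ else (X.2 x hx).to_ _

lemma extendByZeroApp_of_mem {x : P} (hx : x ∈ U) : extendByZeroApp γ x = γ.app ⟨x, hx⟩ :=
  dif_pos hx

lemma extendByZeroApp_naturality (hU : IsUpperSet U) {x y : P} (f : x ⟶ y) :
    X.obj.map f ≫ extendByZeroApp γ y = extendByZeroApp γ x ≫ Y.obj.map f := by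
  by_cases hx : x ∈ U
  · have hy : y ∈ U := hU (leOfHom f) hx
    rw [extendByZeroApp_of_mem γ hx, extendByZeroApp_of_mem γ hy]
    exact γ.naturality (homOfLE (leOfHom f) : (⟨x, hx⟩ : U) ⟶ ⟨y, hy⟩)
  · exact (X.2 x hx).eq_of_src _ _

end Full

lemma full_restrictVanishingOutside (hU : IsUpperSet U) :
    (restrictVanishingOutside U A).Full where
  map_surjective γ :=
    ⟨ObjectProperty.homMk ⟨extendByZeroApp γ, fun _ _ => extendByZeroApp_naturality γ hU⟩,
      by ext x; exact extendByZeroApp_of_mem γ x.2⟩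

lemma essSurj_restrictVanishingOutside [HasZeroObject A] (hU : IsUpperSet U) :
    (restrictVanishingOutside U A).EssSurj where
  mem_essImage H := ⟨⟨extendByZero hU H, fun x hx => isZero_extendByZeroObj H hx⟩,
    ⟨NatIso.ofComponents (fun x => eqToIso (extendByZero_obj_of_mem hU x.2)) fun {x y} f => by
      dsimp [restrictVanishingOutside, Monotone.functor]
      rw [extendByZero_map_of_mem hU x.2 y.2]
      simp only [Category.assoc, eqToHom_trans, eqToHom_refl, Category.comp_id]
      rfl⟩⟩

noncomputable def vanishingOutsideEquiv [HasZeroObject A] (hU : IsUpperSet U) :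
    (vanishingOutside (A := A) U).FullSubcategory ≌ (U ⥤ A) :=
  have := full_restrictVanishingOutside (A := A) hU
  have := essSurj_restrictVanishingOutside (A := A) hU
  have : (restrictVanishingOutside U A).IsEquivalence := {}
  (restrictVanishingOutside U A).asEquivalence

end CategoryTheory

lemma Pi.single_le_iff {ι α : Type*} [DecidableEq ι] [AddCommMonoid α] [PartialOrder α]
    [CanonicallyOrderedAdd α] {i : ι} {a : α} {x : ι → α} :
    Pi.single i a ≤ x ↔ a ≤ x i := by
  refine ⟨fun h => by simpa using h i, fun h j => ?_⟩
  rcases eq_or_ne j i with rfl | hj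
  · simpa using h
  · simp [hj]

lemma Function.update_tsub_eq_tsub_single {ι : Type*} [DecidableEq ι] (r : ι → ℕ) (i : ι)
    (a : ℕ) : Function.update r i (r i - a) = r - Pi.single i a := by
  ext j
  rcases eq_or_ne j i with rfl | hj
  · simp
  · simp [hj]

def boxAddOrderIso {m : ℕ} {r e : Fin m → ℕ} (he : e ≤ r) :
    Box m (r - e) ≃o {v : Box m r | e ≤ v.1} where
  toFun u := ⟨⟨u.1 + e, fun i => (le_tsub_iff_right (he i)).1 (u.2 i)⟩,
    show e ≤ u.1 + e from le_add_self⟩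
  invFun v := ⟨v.1.1 - e, fun i => tsub_le_tsub_right (v.1.2 i) _⟩
  left_inv _ := Subtype.ext (add_tsub_cancel_right _ _)
  right_inv v := Subtype.ext (Subtype.ext (tsub_add_cancel_of_le v.2))
  map_rel_iff' {u w} := show u.1 + e ≤ w.1 + e ↔ u.1 ≤ w.1 from add_le_add_iff_right e

lemma range_boxIncl (n : ℕ) (r : Fin (n + 1) → ℕ) :
    Set.range (boxIncl n r) = {v | Pi.single (Fin.last n) 1 ≤ v.1}ᶜ := by
  ext x
  simp only [Set.mem_compl_iff, Set.mem_ofPred, Pi.single_le_iff, Nat.one_le_iff_ne_zero, not_not]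
  refine ⟨?_, fun h => ⟨⟨Fin.init x.1, fun i => x.2 i.castSucc⟩, ?_⟩⟩
  · rintro ⟨u, rfl⟩
    simp [boxIncl]
  · exact Subtype.ext ((congrArg _ h.symm).trans (Fin.snoc_init_self x.1))

/-- If `rₙ₊₁ > 0` then the kernel of the restriction functor
`π : Func(rIⁿ⁺¹, A) ⥤ Func(tr(r)Iⁿ, A)`, i.e. the full subcategory of functors `G` with
`G (u₁,…,uₙ,0) ≅ 0` for all `(u₁,…,uₙ)`, is equivalent to `Func(sIⁿ⁺¹, A)` where
`s = (r₁,…,rₙ, rₙ₊₁ − 1)`. -/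
theorem boxRestrict_kernel_equivalence
    {A : Type*} [Category A] [Abelian A] (n : ℕ) (r : Fin (n + 1) → ℕ)
    (hr : 0 < r (Fin.last n)) :
    Nonempty
      ((ObjectProperty.FullSubcategory fun G : Box (n + 1) r ⥤ A =>
          ∀ u : Box n fun i => r i.castSucc, IsZero (G.obj (boxIncl n r u))) ≌
        (Box (n + 1) (Function.update r (Fin.last n) (r (Fin.last n) - 1)) ⥤ A)) := by
  let e : Fin (n + 1) → ℕ := Pi.single (Fin.last n) 1
  have he : e ≤ r := Pi.single_le_iff.2 hr
  have hU : IsUpperSet {v : Box (n + 1) r | e ≤ v.1} :=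
    (isUpperSet_Ici e).preimage (Subtype.mono_coe _)
  have hker : (fun G : Box (n + 1) r ⥤ A => ∀ u, IsZero (G.obj (boxIncl n r u))) =
      vanishingOutside {v | e ≤ v.1} := by
    funext G
    refine propext ((Set.forall_mem_range (p := fun x => IsZero (G.obj x))).symm.trans ?_)
    rw [range_boxIncl]
    rfl
  rw [hker, Function.update_tsub_eq_tsub_single]
  exact ⟨(vanishingOutsideEquiv hU).trans (boxAddOrderIso he).equivalence.congrLeft.symm⟩
end

section
/- Let A be a well-powered abelian category, n a positive integer, and r = (r₁,…,rₙ) an n-tuple of natural numbers. Let π : Func(rIⁿ, A) → Func(tr(r)Iⁿ⁻¹, A) be the restriction along the inclusion (x₁,…,x_{n−1}) ↦ (x₁,…,x_{n−1},0), where tr(r) = (r₁,…,r_{n−1}). Then ker(π) is a Serre subcategory of Func(rIⁿ, A) and π induces an equivalence of categories Func(rIⁿ, A)/ker(π) ≃ Func(tr(r)Iⁿ⁻¹, A). -/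
open CategoryTheory CategoryTheory.Limits

/-- A *Serre subcategory* of an abelian category, given as a property of objects:
a nonempty full subcategory closed under subobjects, quotient objects and extensions. -/
structure IsSerreSubcategory {C : Type*} [Category C] [Abelian C] (P : C → Prop) : Prop where
  nonempty : ∃ x : C, P x
  closed_under_sub : ∀ {x y : C} (f : x ⟶ y), Mono f → P y → P x
  closed_under_quot : ∀ {x y : C} (f : x ⟶ y), Epi f → P x → P y
  closed_under_ext : ∀ (S : ShortComplex C), S.ShortExact → P S.X₁ → P S.X₃ → P S.X₂

/-- The property of being in the kernel of the restriction functor `π`: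
a functor `G : rIⁿ⁺¹ ⥤ A` with `G (u₁,…,uₙ,0) ≅ 0` for all `(u₁,…,uₙ)`. -/
def boxKerP {A : Type*} [Category A] [Abelian A] (n : ℕ) (r : Fin (n + 1) → ℕ)
    (G : Box (n + 1) r ⥤ A) : Prop :=
  ∀ u : Box n fun i => r i.castSucc, IsZero (G.obj (boxIncl n r u))

/-- The class of morphisms of `Func(rIⁿ⁺¹, A)` whose kernel and cokernel lie in `ker π`;
the quotient by the Serre subcategory `ker π` is the localization at this class. -/
noncomputable def boxKerW {A : Type*} [Category A] [Abelian A] (n : ℕ) (r : Fin (n + 1) → ℕ) :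
    MorphismProperty (Box (n + 1) r ⥤ A) :=
  fun _ _ f => boxKerP n r (kernel f) ∧ boxKerP n r (cokernel f)

/-! The inclusion `ι u = (u, 0)` is left adjoint to the truncation `τ` dropping the last
coordinate, and `τ ∘ ι = id`. Whiskering, `π = (- ∘ ι)` gets the fully faithful left adjoint
`(- ∘ τ)`, and a functor with a fully faithful left adjoint is the localization at the morphisms
it inverts. Since `π` is exact, these are exactly the morphisms whose kernel and cokernel lie in
`ker π`, and `ker π`, as the kernel of an exact functor, is a Serre subcategory. -/

open Limits MorphismProperty ZeroObject

lemma GaloisCoinsertion.isIso_adjunction_unit {α β : Type*} [PartialOrder α] [Preorder β]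
    {l : α → β} {u : β → α} (gi : GaloisCoinsertion l u) :
    IsIso gi.gc.adjunction.unit :=
  have (a : α) : IsIso (gi.gc.adjunction.unit.app a) :=
    ⟨homOfLE (gi.u_l_eq a).le, Subsingleton.elim _ _, Subsingleton.elim _ _⟩
  NatIso.isIso_of_isIso_app _

instance Adjunction.isIso_whiskerLeft_unit {C D : Type*} [Category C] [Category D] (E : Type*)
    [Category E] {F : C ⥤ D} {G : D ⥤ C} (adj : F ⊣ G) [IsIso adj.unit] :
    IsIso (adj.whiskerLeft E).unit := by
  have (X : C ⥤ E) (c : C) : IsIso (((adj.whiskerLeft E).unit.app X).app c) := by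
    rw [Adjunction.whiskerLeft_unit_app_app]
    infer_instance
  have (X : C ⥤ E) : IsIso ((adj.whiskerLeft E).unit.app X) := NatIso.isIso_of_isIso_app _
  exact NatIso.isIso_of_isIso_app _

lemma IsSerreSubcategory.of_isSerreClass {C : Type*} [Category C] [Abelian C]
    (P : ObjectProperty C) [P.IsSerreClass] : IsSerreSubcategory P where
  nonempty := ⟨0, P.prop_of_isZero (isZero_zero C)⟩
  closed_under_sub f _ := P.prop_of_mono f
  closed_under_quot f _ := P.prop_of_epi f
  closed_under_ext _ hS := P.prop_X₂_of_shortExact hS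

section Restriction

variable (n : ℕ) (r : Fin (n + 1) → ℕ) (A : Type*) [Category A]

def boxTrunc (v : Box (n + 1) r) : Box n fun i => r i.castSucc :=
  ⟨fun i => v.1 i.castSucc, fun i => v.2 i.castSucc⟩

lemma boxTrunc_mono : Monotone (boxTrunc n r) := fun _ _ h i => h i.castSucc

def boxGaloisCoinsertion : GaloisCoinsertion (boxIncl n r) (boxTrunc n r) :=
  GaloisConnection.toGaloisCoinsertion
    (fun u v => by
      refine ⟨fun h i => by simpa [boxIncl, boxTrunc] using h i.castSucc, fun h i => ?_⟩
      induction i using Fin.lastCases with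
      | last => simp [boxIncl]
      | cast j => simpa [boxIncl, boxTrunc] using h j)
    (fun u i => by simp [boxIncl, boxTrunc])

def boxExtend : ((Box n fun i => r i.castSucc) ⥤ A) ⥤ (Box (n + 1) r ⥤ A) :=
  (Functor.whiskeringLeft _ _ A).obj (boxTrunc_mono n r).functor

def boxExtendAdj : boxExtend n r A ⊣ boxRestrict n r A :=
  (boxGaloisCoinsertion n r).gc.adjunction.whiskerLeft A

instance : IsIso (boxExtendAdj n r A).unit :=
  have := (boxGaloisCoinsertion n r).isIso_adjunction_unit
  Adjunction.isIso_whiskerLeft_unit A _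

instance : (boxExtend n r A).Full := (boxExtendAdj n r A).fullyFaithfulLOfIsIsoUnit.full

instance : (boxExtend n r A).Faithful := (boxExtendAdj n r A).fullyFaithfulLOfIsIsoUnit.faithful

end Restriction

section Abelian

variable {A : Type*} [Category A] [Abelian A] (n : ℕ) (r : Fin (n + 1) → ℕ)

instance : PreservesFiniteLimits (boxRestrict n r A) := by
  unfold boxRestrict; infer_instance

instance : PreservesFiniteColimits (boxRestrict n r A) := by
  unfold boxRestrict; infer_instance

lemma boxKerP_eq_kernel : boxKerP (A := A) n r = (boxRestrict n r A).kernel := by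
  ext G
  exact (Functor.isZero_iff ((boxRestrict n r A).obj G)).symm

lemma boxKerW_eq_inverseImage_isomorphisms :
    boxKerW (A := A) n r = (isomorphisms _).inverseImage (boxRestrict n r A) := by
  rw [← Abelian.isoModSerre_kernel_eq_inverseImage_isomorphisms]
  ext F G f
  change boxKerP n r (kernel f) ∧ boxKerP n r (cokernel f) ↔ _
  rw [boxKerP_eq_kernel]
  rfl

instance : (boxRestrict n r A).IsLocalization (boxKerW (A := A) n r) := by
  rw [boxKerW_eq_inverseImage_isomorphisms]
  exact (boxExtendAdj n r A).isLocalization'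

end Abelian

theorem boxRestrict_serre_quotient_general
    {A : Type*} [Category.{u_2} A] [Abelian A] (n : ℕ) (r : Fin (n + 1) → ℕ) :
    IsSerreSubcategory (boxKerP (A := A) n r) ∧
    ∃ G : (boxKerW (A := A) n r).Localization ⥤ ((Box n fun i => r i.castSucc) ⥤ A),
      Nonempty ((boxKerW (A := A) n r).Q ⋙ G ≅ boxRestrict n r A) ∧ G.IsEquivalence := by
  refine ⟨boxKerP_eq_kernel (A := A) n r ▸ .of_isSerreClass _, ?_⟩
  let e := Localization.uniq (boxKerW (A := A) n r).Q (boxRestrict n r A) (boxKerW n r)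
  exact ⟨e.functor, ⟨Localization.compUniqFunctor _ _ _⟩, e.isEquivalence_functor⟩

/-- The kernel of the restriction functor
`π : Func(rIⁿ⁺¹, A) ⥤ Func(tr(r)Iⁿ, A)` is a Serre subcategory, and `π` induces an
equivalence `Func(rIⁿ⁺¹, A) / ker π ≃ Func(tr(r)Iⁿ, A)`, where the quotient is realized
as the localization at the morphisms whose kernel and cokernel lie in `ker π`. -/
theorem boxRestrict_serre_quotient
    {A : Type*} [Category.{u_2} A] [Abelian A] [WellPowered.{u_2} A] (n : ℕ) (r : Fin (n + 1) → ℕ) :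
    IsSerreSubcategory (boxKerP (A := A) n r) ∧
    ∃ G : (boxKerW (A := A) n r).Localization ⥤ ((Box n fun i => r i.castSucc) ⥤ A),
      Nonempty ((boxKerW (A := A) n r).Q ⋙ G ≅ boxRestrict n r A) ∧ G.IsEquivalence :=
  boxRestrict_serre_quotient_general n r
end

section
/- Let (R, m) be a regular local (Noetherian, commutative) ring, let f₁,…,fₙ ∈ m be part of a regular system of parameters of R (that is, elements of m whose images in m/m² are linearly independent over the residue field), and let r₁,…,rₙ be positive integers. Then the ring A = R[t₁,…,tₙ]/(t₁^{r₁} − f₁, …, tₙ^{rₙ} − fₙ) is a regular local ring, of the same Krull dimension as R, with maximal ideal generated by t₁,…,tₙ together with the remaining members of the regular system of parameters. -/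
/-!
The `tᵢ` generate `A` over `R` and are integral (`tᵢ ^ rᵢ = fᵢ`); moreover `R → A` is injective,
since it factors through a tower of free extensions adjoining an `rᵢ`-th root of each `fᵢ`. So
`A` is an integral extension of `R`, and going up with incomparability gives `dim A = dim R`.
Every maximal ideal of `A` lies over `m`, hence contains `mA` and the `tᵢ`, and `A = R + (t)`;
so `A` is local with maximal ideal `(t) + mA`. Completing the images of the `fᵢ` to a basis of
`m/m²` gives `g` with `m = (f, g)` (Nakayama), and since `fᵢ = tᵢ ^ rᵢ ∈ (t)`, the maximal ideal
of `A` is generated by the `tᵢ` and the `gⱼ`: `dim R = dim A` elements.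
-/

open IsLocalRing MvPolynomial

/-- The ring `A = R[t₁,…,tₙ]/(t₁^{r₁} − f₁, …, tₙ^{rₙ} − fₙ)`. -/
noncomputable def rootRing (R : Type*) [CommRing R] (n : ℕ) (f : Fin n → R) (r : Fin n → ℕ) :
    Type _ :=
  MvPolynomial (Fin n) R ⧸
    Ideal.span (Set.range fun i => (X i : MvPolynomial (Fin n) R) ^ r i - C (f i))

noncomputable instance (R : Type*) [CommRing R] (n : ℕ) (f : Fin n → R) (r : Fin n → ℕ) :
    CommRing (rootRing R n f r) := by
  delta rootRing; infer_instance

theorem ringKrullDim_eq_of_isIntegral {R S : Type*} [CommRing R] [CommRing S] [Algebra R S]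
    [Algebra.IsIntegral R S] [FaithfulSMul R S] : ringKrullDim S = ringKrullDim R := by
  refine le_antisymm (Order.krullDim_le_of_strictMono (PrimeSpectrum.comap (algebraMap R S))
    fun _ _ h ↦ Ideal.IsIntegral.comap_lt_comap (R := R) h) (iSup_le fun l ↦ ?_)
  obtain ⟨⟨P, _, _⟩⟩ := Ideal.nonempty_primesOver (S := S) l.head.asIdeal
  obtain ⟨L, hL, -⟩ := Ideal.exists_ltSeries_of_hasGoingUp l P
  exact hL ▸ Order.LTSeries.length_le_krullDim L

universe u

theorem Polynomial.exists_faithfulSMul_forall_exists_aeval_eq_zero {R : Type u} [CommRing R]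
    [Nontrivial R] {n : ℕ} (p : Fin n → Polynomial R) (hp : ∀ i, (p i).Monic)
    (hdeg : ∀ i, (p i).natDegree ≠ 0) :
    ∃ (S : Type u) (_ : CommRing S) (_ : Algebra R S),
      FaithfulSMul R S ∧ ∀ i, ∃ s : S, aeval s (p i) = 0 := by
  induction n with
  | zero => exact ⟨R, _, _, inferInstance, fun i ↦ i.elim0⟩
  | succ n ih =>
    obtain ⟨S, _, _, _, hroots⟩ := ih (fun i ↦ p i.castSucc) (fun i ↦ hp _) (fun i ↦ hdeg _)
    have : Nontrivial S := (FaithfulSMul.algebraMap_injective R S).nontrivial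
    set q := (p (Fin.last n)).map (algebraMap R S)
    have hq : q.Monic := (hp _).map _
    have : Module.Free S (AdjoinRoot q) := hq.free_adjoinRoot
    have hq_deg : q.natDegree ≠ 0 := by rw [(hp _).natDegree_map]; exact hdeg _
    have : Nontrivial (AdjoinRoot q) := Ideal.Quotient.nontrivial_iff.mpr <| by
      rw [ne_eq, Ideal.span_singleton_eq_top, hq.isUnit_iff]
      exact fun h ↦ hq_deg (by rw [h, Polynomial.natDegree_one])
    refine ⟨AdjoinRoot q, inferInstance, inferInstance, ?_, fun i ↦ ?_⟩
    · -- `AdjoinRoot q` is a nonzero free `S`-module, hence faithful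
      rw [faithfulSMul_iff_algebraMap_injective, IsScalarTower.algebraMap_eq R S]
      exact (FaithfulSMul.algebraMap_injective S _).comp (FaithfulSMul.algebraMap_injective R S)
    induction i using Fin.lastCases with
    | last =>
      refine ⟨AdjoinRoot.root q, ?_⟩
      rw [← Polynomial.aeval_map_algebraMap S, AdjoinRoot.aeval_eq, AdjoinRoot.mk_self]
    | cast i =>
      obtain ⟨s, hs⟩ := hroots i
      exact ⟨algebraMap S _ s, by rw [Polynomial.aeval_algebraMap_apply, hs, map_zero]⟩

theorem Submodule.spanFinrank_span_range_le {R M ι : Type*} [Semiring R] [AddCommMonoid M]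
    [Module R M] [Finite ι] (u : ι → M) : (span R (Set.range u)).spanFinrank ≤ Nat.card ι :=
  (spanFinrank_span_le_ncard_of_finite (Set.finite_range u)).trans
    ((Nat.card_coe_set_eq _).symm.trans_le (Finite.card_range_le u))

section

variable {R A : Type*} [CommRing R] [CommRing A] [Algebra R A] {ι : Type*}

theorem algebraMap_quotient_span_surjective_of_adjoin_eq_top {x : ι → A}
    (hx : Algebra.adjoin R (Set.range x) = ⊤) :
    Function.Surjective (algebraMap R (A ⧸ Ideal.span (Set.range x))) := by
  set J := Ideal.span (Set.range x)
  have himage : Ideal.Quotient.mkₐ R J '' Set.range x ⊆ ({0} : Set (A ⧸ J)) := by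
    rintro _ ⟨_, ⟨i, rfl⟩, rfl⟩
    exact (Ideal.Quotient.eq_zero_iff_mem).mpr (Ideal.subset_span ⟨i, rfl⟩)
  rw [Algebra.surjective_algebraMap_iff, eq_bot_iff, ← AlgHom.range_eq_top
    (Ideal.Quotient.mkₐ R J) |>.mpr (Ideal.Quotient.mkₐ_surjective R J), ← Algebra.map_top, ← hx,
    AlgHom.map_adjoin, Algebra.adjoin_le_iff]
  exact himage.trans (Set.singleton_subset_iff.mpr (Subalgebra.zero_mem _))

theorem span_sup_map_eq_span_union {κ : Type*} {x : ι → A} {f : ι → R} {r : ι → ℕ}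
    (hr : ∀ i, 0 < r i) (hxf : ∀ i, x i ^ r i = algebraMap R A (f i)) {I : Ideal R} {g : κ → R}
    (hg : Ideal.span (Set.range f ∪ Set.range g) = I) :
    Ideal.span (Set.range x) ⊔ I.map (algebraMap R A) =
      Ideal.span (Set.range x ∪ Set.range fun j ↦ algebraMap R A (g j)) := by
  have hf : Ideal.span (algebraMap R A '' Set.range f) ≤ Ideal.span (Set.range x) := by
    rw [Ideal.span_le]
    rintro _ ⟨_, ⟨i, rfl⟩, rfl⟩
    rw [← hxf]
    exact Ideal.pow_mem_of_mem _ (Ideal.subset_span (Set.mem_range_self i)) _ (hr i)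
  rw [← hg, Ideal.map_span, Set.image_union, Ideal.span_union, Ideal.span_union, ← sup_assoc,
    sup_eq_left.mpr hf, ← Set.range_comp]
  rfl

variable [IsLocalRing R] [Algebra.IsIntegral R A] {x : ι → A}
  (hx : Algebra.adjoin R (Set.range x) = ⊤)
  (hrad : ∀ i, x i ∈ ((maximalIdeal R).map (algebraMap R A)).radical)
include hx hrad

theorem eq_span_sup_map_maximalIdeal_of_isMaximal (J : Ideal A) [J.IsMaximal] :
    J = Ideal.span (Set.range x) ⊔ (maximalIdeal R).map (algebraMap R A) := by
  have hcomap : J.comap (algebraMap R A) = maximalIdeal R :=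
    eq_maximalIdeal (Ideal.isMaximal_comap_of_isIntegral_of_isMaximal J)
  have hmJ : (maximalIdeal R).map (algebraMap R A) ≤ J := Ideal.map_le_iff_le_comap.mpr hcomap.ge
  have hxJ : Ideal.span (Set.range x) ≤ J := Ideal.span_le.mpr <| by
    rintro _ ⟨i, rfl⟩
    exact (Ideal.IsMaximal.isPrime ‹_›).radical_le_iff.mpr hmJ (hrad i)
  refine le_antisymm (fun a ha ↦ ?_) (sup_le hxJ hmJ)
  obtain ⟨c, hc⟩ := algebraMap_quotient_span_surjective_of_adjoin_eq_top hx (Ideal.Quotient.mk _ a)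
  rw [← Ideal.Quotient.mk_algebraMap, Ideal.Quotient.mk_eq_mk_iff_sub_mem] at hc
  have hcm : algebraMap R A c ∈ (maximalIdeal R).map (algebraMap R A) := by
    refine Ideal.mem_map_of_mem _ (hcomap ▸ ?_)
    simpa using J.add_mem (hxJ hc) ha
  simpa using Ideal.sub_mem _ (Ideal.mem_sup_right hcm) (Ideal.mem_sup_left hc)

theorem existsUnique_isMaximal_of_adjoin_eq_top [Nontrivial A] : ∃! J : Ideal A, J.IsMaximal := by
  obtain ⟨J, hJ⟩ := Ideal.exists_maximal A
  exact ⟨J, hJ, fun J' _ ↦ (eq_span_sup_map_maximalIdeal_of_isMaximal hx hrad J').trans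
    (eq_span_sup_map_maximalIdeal_of_isMaximal hx hrad J).symm⟩

end

namespace IsLocalRing

variable {R : Type*} [CommRing R] [IsLocalRing R] [IsNoetherianRing R]

theorem span_range_eq_maximalIdeal {κ : Type*} (u : κ → R) (hu : ∀ i, u i ∈ maximalIdeal R)
    (h : Submodule.span (ResidueField R)
      (Set.range fun i ↦ (maximalIdeal R).toCotangent ⟨u i, hu i⟩) = ⊤) :
    Ideal.span (Set.range u) = maximalIdeal R := by
  have hspan : Submodule.span R (Set.range fun i ↦ (⟨u i, hu i⟩ : maximalIdeal R)) = ⊤ :=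
    CotangentSpace.span_image_eq_top_iff.mp (by rwa [← Set.range_comp])
  have := congrArg (Submodule.map (maximalIdeal R).subtype) hspan
  rwa [Submodule.map_span, Submodule.map_top, Submodule.range_subtype, ← Set.range_comp] at this

theorem exists_span_union_eq_maximalIdeal {ι : Type*} [Fintype ι] (f : ι → R)
    (hf : ∀ i, f i ∈ maximalIdeal R)
    (hindep : LinearIndependent (ResidueField R)
      fun i ↦ (maximalIdeal R).toCotangent ⟨f i, hf i⟩) :
    ∃ (d : ℕ) (g : Fin d → R), Ideal.span (Set.range f ∪ Set.range g) = maximalIdeal R ∧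
      Fintype.card ι + d = Module.finrank (ResidueField R) (CotangentSpace R) := by
  set W := Submodule.span (ResidueField R)
    (Set.range fun i ↦ (maximalIdeal R).toCotangent ⟨f i, hf i⟩)
  let b := Module.finBasis (ResidueField R) (CotangentSpace R ⧸ W)
  choose w hw using W.mkQ_surjective.comp (maximalIdeal R).toCotangent_surjective
  refine ⟨_, fun j ↦ w (b j), ?_, ?_⟩
  · rw [← Set.Sum.elim_range]
    have hmem : ∀ i, Sum.elim f (fun j ↦ (w (b j) : R)) i ∈ maximalIdeal R := by
      rintro (i | j)
      exacts [hf i, (w (b j)).2]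
    refine span_range_eq_maximalIdeal _ hmem ?_
    set T := Submodule.span (ResidueField R)
      (Set.range fun i ↦ (maximalIdeal R).toCotangent ⟨_, hmem i⟩)
    have hWT : W ≤ T := Submodule.span_le.mpr <| by
      rintro _ ⟨i, rfl⟩
      exact Submodule.subset_span ⟨Sum.inl i, rfl⟩
    rw [← sup_eq_right.mpr hWT, ← Submodule.map_mkQ_eq_top, eq_top_iff, ← b.span_eq,
      Submodule.span_le]
    rintro _ ⟨j, rfl⟩
    exact ⟨_, Submodule.subset_span ⟨Sum.inr j, rfl⟩, hw (b j)⟩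
  · rw [← W.finrank_quotient_add_finrank, finrank_span_eq_card hindep, add_comm]

end IsLocalRing

theorem IsRegularLocalRing.of_span_finset_eq_maximalIdeal {R : Type*} [CommRing R] [IsLocalRing R]
    [IsNoetherianRing R] (s : Finset R) (hs : Ideal.span (s : Set R) = maximalIdeal R)
    (hcard : (s.card : WithBot ℕ∞) ≤ ringKrullDim R) : IsRegularLocalRing R := by
  refine .of_spanFinrank_maximalIdeal_le R (le_trans ?_ hcard)
  rw [← hs]
  exact_mod_cast (Submodule.spanFinrank_span_le_ncard_of_finite s.finite_toSet).trans_eq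
    (Set.ncard_coe_finset s)

namespace rootRing

variable {R : Type*} [CommRing R] {n : ℕ} (f : Fin n → R) (r : Fin n → ℕ)

noncomputable instance : Algebra R (rootRing R n f r) :=
  inferInstanceAs (Algebra R (MvPolynomial (Fin n) R ⧸ _))

instance [IsNoetherianRing R] : IsNoetherianRing (rootRing R n f r) :=
  inferInstanceAs (IsNoetherianRing (MvPolynomial (Fin n) R ⧸ _))

noncomputable def mkₐ : MvPolynomial (Fin n) R →ₐ[R] rootRing R n f r := Ideal.Quotient.mkₐ R _

theorem mkₐ_surjective : Function.Surjective (mkₐ f r) := Ideal.Quotient.mkₐ_surjective R _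

theorem mkₐ_eq_zero_iff {p : MvPolynomial (Fin n) R} :
    mkₐ f r p = 0 ↔
      p ∈ Ideal.span (Set.range fun i ↦ (X i : MvPolynomial (Fin n) R) ^ r i - C (f i)) :=
  Ideal.Quotient.eq_zero_iff_mem

noncomputable def root (i : Fin n) : rootRing R n f r := mkₐ f r (X i)

theorem root_pow (i : Fin n) : root f r i ^ r i = algebraMap R (rootRing R n f r) (f i) := by
  rw [root, ← map_pow, ← (mkₐ f r).commutes, ← sub_eq_zero, ← map_sub, mkₐ_eq_zero_iff,
    MvPolynomial.algebraMap_eq]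
  exact Ideal.subset_span ⟨i, rfl⟩

theorem adjoin_range_root : Algebra.adjoin R (Set.range (root f r)) = ⊤ := by
  rw [show Set.range (root f r) = mkₐ f r '' Set.range X by rw [← Set.range_comp]; rfl,
    ← AlgHom.map_adjoin, adjoin_range_X, Algebra.map_top, AlgHom.range_eq_top]
  exact mkₐ_surjective f r

variable {f r}

theorem isIntegral (hr : ∀ i, 0 < r i) : Algebra.IsIntegral R (rootRing R n f r) := by
  rw [← integralClosure_eq_top_iff, eq_top_iff, ← adjoin_range_root f r, Algebra.adjoin_le_iff]
  rintro _ ⟨i, rfl⟩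
  refine ⟨Polynomial.X ^ r i - Polynomial.C (f i), Polynomial.monic_X_pow_sub_C _ (hr i).ne', ?_⟩
  simp [root_pow]

theorem faithfulSMul [Nontrivial R] (hr : ∀ i, 0 < r i) : FaithfulSMul R (rootRing R n f r) := by
  obtain ⟨S, _, _, _, hroot⟩ := Polynomial.exists_faithfulSMul_forall_exists_aeval_eq_zero
    (fun i ↦ Polynomial.X ^ r i - Polynomial.C (f i))
    (fun i ↦ Polynomial.monic_X_pow_sub_C _ (hr i).ne')
    (fun i ↦ by rw [Polynomial.natDegree_X_pow_sub_C]; exact (hr i).ne')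
  choose s hs using hroot
  have hker : Ideal.span (Set.range fun i ↦ (X i : MvPolynomial (Fin n) R) ^ r i - C (f i)) ≤
      RingHom.ker (aeval s) := by
    rw [Ideal.span_le]
    rintro _ ⟨i, rfl⟩
    simpa using hs i
  rw [faithfulSMul_iff_algebraMap_injective, injective_iff_map_eq_zero]
  intro c hc
  rw [← (mkₐ f r).commutes, mkₐ_eq_zero_iff, MvPolynomial.algebraMap_eq] at hc
  simpa using hker hc

theorem root_mem_radical [IsLocalRing R] (hf : ∀ i, f i ∈ maximalIdeal R) (i : Fin n) :
    root f r i ∈ ((maximalIdeal R).map (algebraMap R (rootRing R n f r))).radical :=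
  ⟨r i, root_pow f r i ▸ Ideal.mem_map_of_mem _ (hf i)⟩

variable [IsLocalRing R] (hr : ∀ i, 0 < r i) (hf : ∀ i, f i ∈ maximalIdeal R)
include hr hf

theorem existsUnique_isMaximal : ∃! I : Ideal (rootRing R n f r), I.IsMaximal := by
  have := isIntegral (f := f) hr
  have := faithfulSMul (f := f) hr
  have : Nontrivial (rootRing R n f r) := (FaithfulSMul.algebraMap_injective R _).nontrivial
  exact existsUnique_isMaximal_of_adjoin_eq_top (adjoin_range_root f r) (root_mem_radical hf)

theorem eq_span_of_isMaximal {κ : Type*} {g : κ → R}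
    (hg : Ideal.span (Set.range f ∪ Set.range g) = maximalIdeal R)
    (I : Ideal (rootRing R n f r)) [I.IsMaximal] :
    I = Ideal.span (Set.range (root f r) ∪ Set.range fun j ↦ algebraMap R _ (g j)) := by
  have := isIntegral (f := f) hr
  rw [eq_span_sup_map_maximalIdeal_of_isMaximal (adjoin_range_root f r) (root_mem_radical hf) I]
  exact span_sup_map_eq_span_union hr (root_pow f r) hg

end rootRing

/-- Let `(R, m)` be a regular local Noetherian commutative ring,
`f₁,…,fₙ ∈ m` part of a regular system of parameters (i.e. their images in `m/m²` are
linearly independent over the residue field), and `r₁,…,rₙ` positive integers.  Then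
`A = R[t₁,…,tₙ]/(tᵢ^{rᵢ} − fᵢ)` is a regular local ring of the same Krull dimension as `R`,
whose maximal ideal is generated by the `tᵢ` together with the remaining members of the
regular system of parameters.  (Regularity of `R`, resp. `A`, is expressed by the existence
of a generating set of the maximal ideal of cardinality equal to the Krull dimension;
locality of `A` by the existence of a unique maximal ideal.) -/
theorem rootRing_regular_local
    (R : Type*) [CommRing R] [IsNoetherianRing R] [IsLocalRing R]
    (hreg : ∃ s : Finset R, Ideal.span (s : Set R) = maximalIdeal R ∧
      ((s.card : ℕ) : WithBot (WithTop ℕ)) = ringKrullDim R)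
    (n : ℕ) (f : Fin n → R) (hf : ∀ i, f i ∈ maximalIdeal R)
    (hindep : LinearIndependent (ResidueField R)
      (fun i : Fin n => (maximalIdeal R).toCotangent ⟨f i, hf i⟩))
    (r : Fin n → ℕ) (hr : ∀ i, 0 < r i) :
    IsNoetherianRing (rootRing R n f r) ∧
    (∃! I : Ideal (rootRing R n f r), I.IsMaximal) ∧
    ringKrullDim (rootRing R n f r) = ringKrullDim R ∧
    (∃ s : Finset (rootRing R n f r),
      (∀ I : Ideal (rootRing R n f r), I.IsMaximal → Ideal.span (s : Set (rootRing R n f r)) = I) ∧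
      ((s.card : ℕ) : WithBot (WithTop ℕ)) = ringKrullDim (rootRing R n f r)) ∧
    (∀ (d : ℕ) (g : Fin d → R),
      Ideal.span (Set.range f ∪ Set.range g) = maximalIdeal R →
      (((n + d : ℕ) : WithBot (WithTop ℕ)) = ringKrullDim R) →
      ∀ I : Ideal (rootRing R n f r), I.IsMaximal →
        I = Ideal.span
          (Set.range (fun i : Fin n =>
              (Ideal.Quotient.mk _ (X i) : rootRing R n f r)) ∪
            Set.range (fun j : Fin d =>
              (Ideal.Quotient.mk _ (C (g j)) : rootRing R n f r)))) := by
  obtain ⟨s, hs, hcard⟩ := hreg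
  have : IsRegularLocalRing R := .of_span_finset_eq_maximalIdeal s hs hcard.le
  have := rootRing.isIntegral (f := f) hr
  have := rootRing.faithfulSMul (f := f) hr
  have hdim : ringKrullDim (rootRing R n f r) = ringKrullDim R := ringKrullDim_eq_of_isIntegral
  have huniq := rootRing.existsUnique_isMaximal hr hf
  have : IsLocalRing (rootRing R n f r) := .of_unique_max_ideal huniq
  obtain ⟨d, g, hg, hfg⟩ := exists_span_union_eq_maximalIdeal f hf hindep
  have : IsRegularLocalRing (rootRing R n f r) := .of_spanFinrank_maximalIdeal_le _ <| by
    rw [rootRing.eq_span_of_isMaximal hr hf hg (maximalIdeal _), hdim,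
      ← IsRegularLocalRing.spanFinrank_maximalIdeal,
      spanFinrank_maximalIdeal_eq_finrank_cotangentSpace, ← hfg, ← Set.Sum.elim_range]
    exact_mod_cast (Submodule.spanFinrank_span_range_le _).trans (by simp)
  obtain ⟨t, ht_card, ht⟩ := Submodule.FG.exists_span_finset_card_eq_spanFinrank
    (IsNoetherian.noetherian (maximalIdeal (rootRing R n f r)))
  refine ⟨inferInstance, huniq, hdim, ⟨t, fun I hI ↦ ht.trans (eq_maximalIdeal hI).symm, ?_⟩,
    fun d g hg _ I hI ↦ rootRing.eq_span_of_isMaximal hr hf hg I⟩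
  rw [ht_card]
  exact IsRegularLocalRing.spanFinrank_maximalIdeal
end
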